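/- For any i.i.d. source distribution p_0(x) on a finite alphabet, the set of conditional distributions p(a,b|x) on finite alphabets 𝒜 × ℬ such that the joint distribution p_0(x)p(a,b|x) satisfies H(A) ≥ I(X; A, B) is a convex subset of the set of all conditional distributions p(a,b|x). -/

import Mathlib

open scoped Classical BigOperators

noncomputable section

namespace Coord

variable {Ω : Type*} [Fintype Ω]

/-- `p` is a probability mass function on the finite sample space `Ω`. -/
def IsPmf (p : Ω → ℝ) : Prop := (∀ ω, 0 ≤ p ω) ∧ ∑ ω, p ω = 1

/-- Distribution (pmf) of the random variable `X` under `p`. -/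
def dist (p : Ω → ℝ) {α : Type*} [Fintype α] (X : Ω → α) (a : α) : ℝ :=
  ∑ ω, if X ω = a then p ω else 0

/-- Shannon entropy (base 2) of `X` under `p`. -/
def H (p : Ω → ℝ) {α : Type*} [Fintype α] (X : Ω → α) : ℝ :=
  -∑ a, dist p X a * Real.logb 2 (dist p X a)

/-- Conditional entropy `H(X | Y)`. -/
def Hc (p : Ω → ℝ) {α β : Type*} [Fintype α] [Fintype β] (X : Ω → α) (Y : Ω → β) : ℝ :=
  H p (fun ω => (X ω, Y ω)) - H p Y

/-- Mutual information `I(X ; Y)`. -/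
def MI (p : Ω → ℝ) {α β : Type*} [Fintype α] [Fintype β] (X : Ω → α) (Y : Ω → β) : ℝ :=
  H p X + H p Y - H p (fun ω => (X ω, Y ω))

/-- Conditional mutual information `I(X ; Y | Z)`. -/
def MIc (p : Ω → ℝ) {α β γ : Type*} [Fintype α] [Fintype β] [Fintype γ]
    (X : Ω → α) (Y : Ω → β) (Z : Ω → γ) : ℝ :=
  H p (fun ω => (X ω, Z ω)) + H p (fun ω => (Y ω, Z ω))
    - H p (fun ω => (X ω, Y ω, Z ω)) - H p Z

/-- `X` and `Y` are independent under `p`. -/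
def Indep (p : Ω → ℝ) {α β : Type*} [Fintype α] [Fintype β] (X : Ω → α) (Y : Ω → β) : Prop :=
  ∀ a b, dist p (fun ω => (X ω, Y ω)) (a, b) = dist p X a * dist p Y b

/-- Markov chain `X - A - B` : `X` and `B` are conditionally independent given `A`. -/
def Markov (p : Ω → ℝ) {α β γ : Type*} [Fintype α] [Fintype β] [Fintype γ]
    (X : Ω → α) (A : Ω → β) (B : Ω → γ) : Prop :=
  ∀ x a b, dist p (fun ω => (X ω, A ω, B ω)) (x, a, b) * dist p A a =
    dist p (fun ω => (X ω, A ω)) (x, a) * dist p (fun ω => (A ω, B ω)) (a, b)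

/-- The random vector `X` is i.i.d. with per-coordinate marginal `p0`. -/
def IID {n : ℕ} (p : Ω → ℝ) {𝒳 : Type*} [Fintype 𝒳] (X : Ω → Fin n → 𝒳) (p0 : 𝒳 → ℝ) : Prop :=
  ∀ x : Fin n → 𝒳, dist p X x = ∏ i, p0 (x i)

/-- The joint pmf on `Ω × Fin n` obtained by adjoining a uniform, independent time index `Q`. -/
def unif {n : ℕ} (p : Ω → ℝ) : Ω × Fin n → ℝ := fun ωq => p ωq.1 / n

/-- The strict prefix `X^{q-1}` of a random vector, padded with `none`. -/
def pre {n : ℕ} {𝒳 : Type*} (X : Ω → Fin n → 𝒳) (q : Fin n) : Ω → Fin n → Option 𝒳 :=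
  fun ω i => if (i : ℕ) < (q : ℕ) then some (X ω i) else none

end Coord

open Coord

/-! Since `I(X;A,B) = H(X) - H(X|A,B)`, the quantity `H(A) - I(X;A,B)` equals
`H(A) + H(X|A,B) - H(X)`. For the joint law `p₀(x) k(x)(a,b)` the `X`-marginal is `p₀` whatever the
kernel `k`, so `H(X)` is constant, and the joint law is linear in `k`. The entropy `H(A)` is concave
in the joint law because its marginals are linear in it and `-u log u` is concave. The conditional
entropy is `H(X|Y) = -∑ q(x,y) (log q(x,y) - log q(y))` with `q(x,y) ≤ q(y)`, and
`(u, v) ↦ u log u - u log v` is jointly convex on `0 ≤ u ≤ v` (the log-sum inequality), so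
`H(X|Y)` is concave too. The constraint set is therefore a superlevel set of a concave function. -/

open Real

namespace Real

theorem mul_log_sub_mul_log_tangent_le {u v r : ℝ} (hu : 0 ≤ u) (huv : u ≤ v) (hr : 0 < r) :
    u * log r + u - r * v ≤ u * log u - u * log v := by
  rcases hu.eq_or_lt with rfl | hu
  · simp only [zero_mul, add_zero, zero_sub, sub_zero, neg_nonpos]
    positivity
  have hv : 0 < v := hu.trans_le huv
  -- `x - 1 ≤ x log x` at `x = u / (r v)`
  have key := mul_le_mul_of_nonneg_left (self_sub_one_le_mul_log (x := u / (r * v)) (by positivity))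
    (mul_pos hr hv).le
  rw [log_div hu.ne' (by positivity), log_mul hr.ne' hv.ne'] at key
  field_simp at key
  linarith

theorem mul_log_sub_mul_log_add_le {u₁ u₂ v₁ v₂ : ℝ} (hu₁ : 0 ≤ u₁) (hu₂ : 0 ≤ u₂)
    (huv₁ : u₁ ≤ v₁) (huv₂ : u₂ ≤ v₂) :
    (u₁ + u₂) * log (u₁ + u₂) - (u₁ + u₂) * log (v₁ + v₂) ≤
      (u₁ * log u₁ - u₁ * log v₁) + (u₂ * log u₂ - u₂ * log v₂) := by
  rcases (add_nonneg hu₁ hu₂).eq_or_lt with hU | hU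
  · obtain ⟨rfl, rfl⟩ := (add_eq_zero_iff_of_nonneg hu₁ hu₂).1 hU.symm
    simp
  have hV : 0 < v₁ + v₂ := hU.trans_le (add_le_add huv₁ huv₂)
  -- tangent bounds at the common ratio `r = (u₁ + u₂) / (v₁ + v₂)` add up to the left-hand side
  have hr : 0 < (u₁ + u₂) / (v₁ + v₂) := div_pos hU hV
  have h₁ := mul_log_sub_mul_log_tangent_le hu₁ huv₁ hr
  have h₂ := mul_log_sub_mul_log_tangent_le hu₂ huv₂ hr
  have hsum : (u₁ + u₂) / (v₁ + v₂) * v₁ + (u₁ + u₂) / (v₁ + v₂) * v₂ = u₁ + u₂ := by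
    field_simp
  rw [log_div hU.ne' hV.ne'] at h₁ h₂
  nlinarith

theorem mul_log_sub_mul_log_mul {c u v : ℝ} (hc : 0 ≤ c) (hu : 0 ≤ u) (huv : u ≤ v) :
    c * u * log (c * u) - c * u * log (c * v) = c * (u * log u - u * log v) := by
  rcases hc.eq_or_lt with rfl | hc
  · simp
  rcases hu.eq_or_lt with rfl | hu
  · simp
  rw [log_mul hc.ne' hu.ne', log_mul hc.ne' (hu.trans_le huv).ne']
  ring

theorem convexOn_mul_log_sub_mul_log :
    ConvexOn ℝ {z : ℝ × ℝ | 0 ≤ z.1 ∧ z.1 ≤ z.2} fun z => z.1 * log z.1 - z.1 * log z.2 := by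
  refine ⟨?_, ?_⟩
  · rintro z ⟨hz₀, hz⟩ w ⟨hw₀, hw⟩ a b ha hb -
    simp only [Set.mem_ofPred_eq, Prod.fst_add, Prod.snd_add, Prod.smul_fst, Prod.smul_snd,
      smul_eq_mul]
    constructor <;> nlinarith
  · rintro z ⟨hz₀, hz⟩ w ⟨hw₀, hw⟩ a b ha hb -
    simp only [Prod.fst_add, Prod.snd_add, Prod.smul_fst, Prod.smul_snd, smul_eq_mul]
    rw [← mul_log_sub_mul_log_mul ha hz₀ hz, ← mul_log_sub_mul_log_mul hb hw₀ hw]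
    exact mul_log_sub_mul_log_add_le (by positivity) (by positivity)
      (mul_le_mul_of_nonneg_left hz ha) (mul_le_mul_of_nonneg_left hw hb)

end Real

theorem ConcaveOn.sum {𝕜 E β ι : Type*} [Semiring 𝕜] [PartialOrder 𝕜] [AddCommMonoid E]
    [AddCommMonoid β] [PartialOrder β] [IsOrderedAddMonoid β] [SMul 𝕜 E] [Module 𝕜 β]
    {s : Set E} (hs : Convex 𝕜 s) {t : Finset ι} {f : ι → E → β}
    (hf : ∀ i ∈ t, ConcaveOn 𝕜 s (f i)) : ConcaveOn 𝕜 s fun x => ∑ i ∈ t, f i x := by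
  classical
  induction t using Finset.induction_on with
  | empty => simpa using concaveOn_const 0 hs
  | insert i t hi ih =>
    simp only [Finset.sum_insert hi]
    exact (hf i (Finset.mem_insert_self i t)).add (ih fun j hj => hf j (Finset.mem_insert_of_mem hj))

namespace Coord

variable {Ω α β γ : Type*} [Fintype Ω] [Fintype α] [Fintype β] [Fintype γ]

theorem isPmf_iff_mem_stdSimplex (p : Ω → ℝ) : IsPmf p ↔ p ∈ stdSimplex ℝ Ω := Iff.rfl

def distLinearMap (X : Ω → α) (a : α) : (Ω → ℝ) →ₗ[ℝ] ℝ where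
  toFun p := dist p X a
  map_add' p q := by
    simp only [dist, Pi.add_apply, ← Finset.sum_add_distrib]
    exact Finset.sum_congr rfl fun ω _ => by split_ifs <;> simp
  map_smul' c p := by
    simp only [dist, Pi.smul_apply, smul_eq_mul, RingHom.id_apply, Finset.mul_sum]
    exact Finset.sum_congr rfl fun ω _ => by split_ifs <;> simp

theorem dist_nonneg {p : Ω → ℝ} (hp : 0 ≤ p) (X : Ω → α) (a : α) : 0 ≤ dist p X a :=
  Finset.sum_nonneg fun ω _ => by split_ifs; exacts [hp ω, le_rfl]

theorem dist_pair_le {p : Ω → ℝ} (hp : 0 ≤ p) (X : Ω → α) (Y : Ω → β) (a : α) (b : β) :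
    dist p (fun ω => (X ω, Y ω)) (a, b) ≤ dist p Y b :=
  Finset.sum_le_sum fun ω _ => by
    split_ifs with hXY hY hY
    exacts [le_rfl, absurd (Prod.mk.inj hXY).2 hY, hp ω, le_rfl]

theorem sum_dist_pair (p : Ω → ℝ) (X : Ω → α) (Y : Ω → β) (b : β) :
    ∑ a, dist p (fun ω => (X ω, Y ω)) (a, b) = dist p Y b := by
  simp only [dist, Prod.mk.injEq, ite_and]
  rw [Finset.sum_comm]
  simp

theorem H_eq_sum_negMulLog (p : Ω → ℝ) (X : Ω → α) :
    H p X = (log 2)⁻¹ * ∑ a, negMulLog (dist p X a) := by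
  simp only [H, logb, negMulLog, Finset.mul_sum, ← Finset.sum_neg_distrib]
  exact Finset.sum_congr rfl fun a _ => by ring

theorem Hc_eq_sum (p : Ω → ℝ) (X : Ω → α) (Y : Ω → β) :
    Hc p X Y = (log 2)⁻¹ * ∑ b, ∑ a,
      -(dist p (fun ω => (X ω, Y ω)) (a, b) * log (dist p (fun ω => (X ω, Y ω)) (a, b)) -
        dist p (fun ω => (X ω, Y ω)) (a, b) * log (dist p Y b)) := by
  simp only [Hc, H_eq_sum_negMulLog, negMulLog_eq_neg, Fintype.sum_prod_type]
  rw [Finset.sum_comm, ← mul_sub, ← Finset.sum_sub_distrib]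
  congr 1
  refine Finset.sum_congr rfl fun b _ => ?_
  rw [← sum_dist_pair p X Y b, Finset.sum_mul, ← Finset.sum_neg_distrib, sum_dist_pair,
    ← Finset.sum_sub_distrib]
  exact Finset.sum_congr rfl fun a _ => by ring

theorem concaveOn_H (X : Ω → α) : ConcaveOn ℝ (Set.Ici 0) fun p => H p X := by
  have hterm (a : α) : ConcaveOn ℝ (Set.Ici 0) fun p => negMulLog (dist p X a) :=
    (concaveOn_negMulLog.comp_linearMap (distLinearMap X a)).subset
      (fun p hp => dist_nonneg hp X a) (convex_Ici 0)
  refine ((ConcaveOn.sum (t := Finset.univ) (convex_Ici 0) fun a _ => hterm a).smul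
    (inv_nonneg.2 (log_pos one_lt_two).le)).congr fun p _ => ?_
  simp only [smul_eq_mul, H_eq_sum_negMulLog]

theorem concaveOn_Hc (X : Ω → α) (Y : Ω → β) : ConcaveOn ℝ (Set.Ici 0) fun p => Hc p X Y := by
  have hterm (a : α) (b : β) : ConcaveOn ℝ (Set.Ici 0) fun p =>
      -(dist p (fun ω => (X ω, Y ω)) (a, b) * log (dist p (fun ω => (X ω, Y ω)) (a, b)) -
        dist p (fun ω => (X ω, Y ω)) (a, b) * log (dist p Y b)) :=
    (neg_concaveOn_iff.2 (convexOn_mul_log_sub_mul_log.comp_linearMap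
      ((distLinearMap (fun ω => (X ω, Y ω)) (a, b)).prod (distLinearMap Y b)))).subset
      (fun p hp => ⟨dist_nonneg hp _ _, dist_pair_le hp X Y a b⟩) (convex_Ici 0)
  have hsum := ConcaveOn.sum (t := Finset.univ) (convex_Ici 0) fun b _ =>
    ConcaveOn.sum (t := Finset.univ) (convex_Ici 0) fun a _ => hterm a b
  refine (hsum.smul (inv_nonneg.2 (log_pos one_lt_two).le)).congr fun p _ => ?_
  simp only [smul_eq_mul, Hc_eq_sum]

theorem MI_eq_H_sub_Hc (p : Ω → ℝ) (X : Ω → α) (Y : Ω → β) : MI p X Y = H p X - Hc p X Y := by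
  rw [MI, Hc]
  ring

def joint (p₀ : α → ℝ) : (α → β → ℝ) →ₗ[ℝ] (α × β → ℝ) where
  toFun k ω := p₀ ω.1 * k ω.1 ω.2
  map_add' k k' := by
    ext ω
    simp only [Pi.add_apply]
    ring
  map_smul' c k := by
    ext ω
    simp only [Pi.smul_apply, smul_eq_mul, RingHom.id_apply]
    ring

theorem dist_joint_fst (p₀ : α → ℝ) {k : α → β → ℝ} (hk : ∀ x, IsPmf (k x)) (x : α) :
    dist (joint p₀ k) Prod.fst x = dist p₀ id x := by
  simp only [dist, Fintype.sum_prod_type, id, joint, LinearMap.coe_mk, AddHom.coe_mk]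
  simp [← Finset.mul_sum, (hk x).2]

theorem H_joint_fst (p₀ : α → ℝ) {k : α → β → ℝ} (hk : ∀ x, IsPmf (k x)) :
    H (joint p₀ k) Prod.fst = H p₀ id := by
  simp only [H, dist_joint_fst p₀ hk]

theorem concaveOn_H_sub_MI_joint {p₀ : α → ℝ} (hp₀ : 0 ≤ p₀) (Z : α × β → γ) :
    ConcaveOn ℝ (Set.univ.pi fun _ => stdSimplex ℝ β)
      fun k => H (joint p₀ k) Z - MI (joint p₀ k) Prod.fst Prod.snd := by
  have hS : Convex ℝ (Set.univ.pi fun _ : α => stdSimplex ℝ β) :=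
    convex_pi fun _ _ => convex_stdSimplex ℝ β
  have hjoint : Set.univ.pi (fun _ => stdSimplex ℝ β) ⊆ joint p₀ ⁻¹' Set.Ici 0 :=
    fun k hk ω => mul_nonneg (hp₀ ω.1) ((hk ω.1 (Set.mem_univ _)).1 ω.2)
  have hZ := ((concaveOn_H Z).comp_linearMap (joint p₀)).subset hjoint hS
  have hc := ((concaveOn_Hc Prod.fst Prod.snd).comp_linearMap (joint p₀)).subset hjoint hS
  refine ((hZ.add hc).sub (convexOn_const (H p₀ id) hS)).congr fun k hk => ?_
  simp only [Pi.add_apply, Pi.sub_apply, Function.comp_apply, MI_eq_H_sub_Hc,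
    H_joint_fst p₀ fun x => (isPmf_iff_mem_stdSimplex _).2 (hk x (Set.mem_univ x))]
  ring

end Coord

/-- For fixed `p0`, the set of conditional distributions `p(a,b|x)` such that the
joint `p0(x)p(a,b|x)` satisfies `H(A) ≥ I(X; A, B)` is convex. -/
theorem stmt7 {𝒳 𝒜 ℬ : Type*} [Fintype 𝒳] [Fintype 𝒜] [Fintype ℬ]
    (p0 : 𝒳 → ℝ) (hp0 : IsPmf p0)
    (k1 k2 : 𝒳 → 𝒜 × ℬ → ℝ) (hk1 : ∀ x, IsPmf (k1 x)) (hk2 : ∀ x, IsPmf (k2 x))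
    (h1 : H (fun ω : 𝒳 × 𝒜 × ℬ => p0 ω.1 * k1 ω.1 ω.2) (fun ω => ω.2.1) ≥
          MI (fun ω : 𝒳 × 𝒜 × ℬ => p0 ω.1 * k1 ω.1 ω.2) (fun ω => ω.1) (fun ω => ω.2))
    (h2 : H (fun ω : 𝒳 × 𝒜 × ℬ => p0 ω.1 * k2 ω.1 ω.2) (fun ω => ω.2.1) ≥
          MI (fun ω : 𝒳 × 𝒜 × ℬ => p0 ω.1 * k2 ω.1 ω.2) (fun ω => ω.1) (fun ω => ω.2))
    (t : ℝ) (ht0 : 0 ≤ t) (ht1 : t ≤ 1) :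
    H (fun ω : 𝒳 × 𝒜 × ℬ => p0 ω.1 * (t * k1 ω.1 ω.2 + (1 - t) * k2 ω.1 ω.2))
        (fun ω => ω.2.1) ≥
      MI (fun ω : 𝒳 × 𝒜 × ℬ => p0 ω.1 * (t * k1 ω.1 ω.2 + (1 - t) * k2 ω.1 ω.2))
        (fun ω => ω.1) (fun ω => ω.2) := by
  have hconv := (concaveOn_H_sub_MI_joint hp0.1 fun ω : 𝒳 × 𝒜 × ℬ => ω.2.1).convex_ge 0
  have hmix := hconv
    ⟨fun x _ => (isPmf_iff_mem_stdSimplex _).1 (hk1 x), sub_nonneg.2 h1⟩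
    ⟨fun x _ => (isPmf_iff_mem_stdSimplex _).1 (hk2 x), sub_nonneg.2 h2⟩
    ht0 (sub_nonneg.2 ht1) (add_sub_cancel t 1)
  exact sub_nonneg.1 hmix.2
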